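/- Let {·,·} be a Poisson bracket on a finite-dimensional manifold, let N^1,…,N^r, u^1,…,u^m be coordinates with the N^a pairwise in involution ({N^a, N^b} = 0), and set G^{A,a} = {u^A, N^a}. If M_r is the zero locus of the functions G^{A,2} (A = 1,…,m) and the Jacobian matrix (∂G^{A,2}/∂u^B) is invertible on M_r, then all G^{B,b} vanish identically on M_r; i.e. M_r is a common stationary set for all the Hamiltonian flows generated by the N^a. -/

import Mathlib

/-- The Poisson bracket of two functions determined by the Poisson bivector
`P`: `{f,g}(x) = Σ_{ij} P^{ij}(x) ∂_i f(x) ∂_j g(x)`. -/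
noncomputable def pBracket {n : ℕ} (P : (Fin n → ℝ) → Matrix (Fin n) (Fin n) ℝ)
    (f g : (Fin n → ℝ) → ℝ) (x : Fin n → ℝ) : ℝ :=
  ∑ i, ∑ j, P x i j * fderiv ℝ f x (Pi.single i 1) * fderiv ℝ g x (Pi.single j 1)

/-- On a finite-dimensional Poisson manifold with coordinates
`(N^1,…,N^r,u^1,…,u^m)`, where the `N^a` are pairwise in involution, set
`G^{A,a} = {u^A, N^a}` and let `M_r` be the zero locus of the `G^{A,a₀}` for a
distinguished index `a₀`.  If the Jacobian `(∂G^{A,a₀}/∂u^B)` is invertible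
along `M_r`, then all the `G^{A,a}` vanish on `M_r`: `M_r` is a common
stationary set for all the Hamiltonian flows generated by the `N^a`. -/
theorem stmt9 (r m : ℕ) (a₀ : Fin r)
    (P : (Fin (r + m) → ℝ) → Matrix (Fin (r + m)) (Fin (r + m)) ℝ)
    (hPsmooth : ∀ i j, ContDiff ℝ (⊤ : ℕ∞) fun x => P x i j)
    (hPanti : ∀ x i j, P x i j = - P x j i)
    -- Jacobi identity for the bracket
    (hJacobi : ∀ f g h : (Fin (r + m) → ℝ) → ℝ,
      ContDiff ℝ (⊤ : ℕ∞) f → ContDiff ℝ (⊤ : ℕ∞) g → ContDiff ℝ (⊤ : ℕ∞) h →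
      ∀ x, pBracket P f (pBracket P g h) x + pBracket P g (pBracket P h f) x
        + pBracket P h (pBracket P f g) x = 0)
    -- coordinate functions N^a and u^A
    (Nc : Fin r → (Fin (r + m) → ℝ) → ℝ)
    (hNc : ∀ a x, Nc a x = x (Fin.castAdd m a))
    (uc : Fin m → (Fin (r + m) → ℝ) → ℝ)
    (huc : ∀ A x, uc A x = x (Fin.natAdd r A))
    -- the N^a are pairwise in involution
    (hinv : ∀ a b : Fin r, ∀ x, pBracket P (Nc a) (Nc b) x = 0)
    (G : Fin m → Fin r → (Fin (r + m) → ℝ) → ℝ)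
    (hG : ∀ A a, G A a = pBracket P (uc A) (Nc a))
    (Mr : Set (Fin (r + m) → ℝ)) (hMr : Mr = {x | ∀ A, G A a₀ x = 0})
    -- nondegeneracy of the Jacobian ∂G^{A,a₀}/∂u^B on M_r
    (hjac : ∀ x ∈ Mr, IsUnit (Matrix.det (Matrix.of fun A B : Fin m =>
      fderiv ℝ (G A a₀) x (Pi.single (Fin.natAdd r B) 1)))) :
    ∀ x ∈ Mr, ∀ A a, G A a x = 0 := by

  -- fderiv of coordinate functions
  have hcoord : ∀ (k : Fin (r + m)) (x : Fin (r + m) → ℝ) (j : Fin (r + m)),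
      fderiv ℝ (fun y : Fin (r + m) → ℝ => y k) x (Pi.single j 1)
        = (Pi.single (M := fun _ => ℝ) j 1) k := by
    intro k x j
    rw [show (fun y : Fin (r + m) → ℝ => y k)
        = (ContinuousLinearMap.proj (R := ℝ) (φ := fun _ : Fin (r + m) => ℝ) k) from rfl,
      ContinuousLinearMap.fderiv]
    rfl
  have hNc' : ∀ a, Nc a = fun y => y (Fin.castAdd m a) := fun a => funext (hNc a)
  have huc' : ∀ A, uc A = fun y => y (Fin.natAdd r A) := fun A => funext (huc A)
  have hfN : ∀ (f : (Fin (r + m) → ℝ) → ℝ) (k : Fin (r + m)) (x : Fin (r + m) → ℝ),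
      pBracket P f (fun y => y k) x
        = ∑ i, P x i k * fderiv ℝ f x (Pi.single i 1) := by
    intro f k x
    unfold pBracket
    have h : ∀ i : Fin (r + m),
        ∑ j, P x i j * fderiv ℝ f x (Pi.single i 1)
            * fderiv ℝ (fun y : Fin (r + m) → ℝ => y k) x (Pi.single j 1)
          = P x i k * fderiv ℝ f x (Pi.single i 1) := by
      intro i
      rw [Finset.sum_eq_single k]
      · rw [hcoord k x k]; simp
      · intro j _ hj
        rw [hcoord k x j, Pi.single_apply]
        simp [hj.symm]
      · simp
    simp only [h]
  have hNf : ∀ (k : Fin (r + m)) (f : (Fin (r + m) → ℝ) → ℝ) (x : Fin (r + m) → ℝ),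
      pBracket P (fun y => y k) f x
        = ∑ j, P x k j * fderiv ℝ f x (Pi.single j 1) := by
    intro k f x
    unfold pBracket
    rw [Finset.sum_eq_single k]
    · congr 1; funext j; rw [hcoord k x k]; simp
    · intro i _ hi
      have h : ∀ j : Fin (r + m),
          P x i j * fderiv ℝ (fun y : Fin (r + m) → ℝ => y k) x (Pi.single i 1)
              * fderiv ℝ f x (Pi.single j 1) = 0 := by
        intro j
        rw [hcoord k x i, Pi.single_apply]
        simp [hi.symm]
      simp only [h, Finset.sum_const_zero]
    · simp
  have hPG : ∀ (A : Fin m) (a : Fin r) (x), P x (Fin.natAdd r A) (Fin.castAdd m a) = G A a x := by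
    intro A a x
    rw [hG, huc', hNc', hfN]
    rw [Finset.sum_eq_single (Fin.natAdd r A)]
    · rw [hcoord]; simp
    · intro i _ hi
      rw [hcoord, Pi.single_apply]
      simp [hi.symm]
    · simp
  have hPNN : ∀ (a b : Fin r) (x), P x (Fin.castAdd m a) (Fin.castAdd m b) = 0 := by
    intro a b x
    have h := hinv a b x
    rw [hNc', hNc', hfN] at h
    rw [Finset.sum_eq_single (Fin.castAdd m a)] at h
    · rw [hcoord] at h; simpa using h
    · intro i _ hi
      rw [hcoord, Pi.single_apply]
      simp [hi.symm]
    · simp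
  have hNbf : ∀ (b : Fin r) (f : (Fin (r + m) → ℝ) → ℝ) (x : Fin (r + m) → ℝ),
      pBracket P (Nc b) f x
        = -∑ B : Fin m, G B b x * fderiv ℝ f x (Pi.single (Fin.natAdd r B) 1) := by
    intro b f x
    rw [hNc', hNf, Fin.sum_univ_add]
    have h1 : ∀ a : Fin r,
        P x (Fin.castAdd m b) (Fin.castAdd m a)
          * fderiv ℝ f x (Pi.single (Fin.castAdd m a) 1) = 0 := by
      intro a; rw [hPNN]; ring
    simp only [h1, Finset.sum_const_zero, zero_add]
    rw [← Finset.sum_neg_distrib]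
    congr 1; funext B
    have h2 : P x (Fin.castAdd m b) (Fin.natAdd r B) = - G B b x := by
      rw [hPanti, hPG]
    rw [h2]; ring
  have hsm : ∀ k : Fin (r + m), ContDiff ℝ (⊤ : ℕ∞) (fun y : Fin (r + m) → ℝ => y k) :=
    fun k => (ContinuousLinearMap.proj (R := ℝ) (φ := fun _ : Fin (r + m) => ℝ) k).contDiff
  intro x hx A a
  have hsum : ∀ A' : Fin m,
      ∑ B : Fin m, fderiv ℝ (G A' a₀) x (Pi.single (Fin.natAdd r B) 1) * G B a x = 0 := by
    intro A'
    have hJ := hJacobi (uc A') (Nc a₀) (Nc a)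
      (by rw [huc']; exact hsm _) (by rw [hNc']; exact hsm _) (by rw [hNc']; exact hsm _) x
    have hz : pBracket P (Nc a₀) (Nc a) = fun _ => 0 := funext (hinv a₀ a)
    have h1 : pBracket P (uc A') (pBracket P (Nc a₀) (Nc a)) x = 0 := by
      rw [hz]
      unfold pBracket
      simp [fderiv_const]
    have hanti : pBracket P (Nc a) (uc A') = fun y => -(G A' a y) := by
      funext y
      rw [hG]
      unfold pBracket
      rw [← Finset.sum_neg_distrib, Finset.sum_comm]
      congr 1; funext i
      rw [← Finset.sum_neg_distrib]
      congr 1; funext j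
      rw [hPanti]; ring
    have h2 : pBracket P (Nc a₀) (pBracket P (Nc a) (uc A')) x = 0 := by
      rw [hanti, hNbf]
      rw [hMr] at hx
      have h : ∀ B : Fin m,
          G B a₀ x * fderiv ℝ (fun y => -(G A' a y)) x (Pi.single (Fin.natAdd r B) 1) = 0 := by
        intro B; rw [hx B]; ring
      simp only [h, Finset.sum_const_zero, neg_zero]
    have h3 : pBracket P (Nc a) (pBracket P (uc A') (Nc a₀)) x
        = -∑ B : Fin m, G B a x * fderiv ℝ (G A' a₀) x (Pi.single (Fin.natAdd r B) 1) := by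
      rw [← hG, hNbf]
    rw [h1, h2, h3] at hJ
    have h4 : ∑ B : Fin m, G B a x * fderiv ℝ (G A' a₀) x (Pi.single (Fin.natAdd r B) 1) = 0 := by
      linarith
    rw [← h4]
    congr 1; funext B; ring
  -- matrix argument
  set J : Matrix (Fin m) (Fin m) ℝ := Matrix.of fun A B : Fin m =>
    fderiv ℝ (G A a₀) x (Pi.single (Fin.natAdd r B) 1) with hJdef
  set v : Fin m → ℝ := fun B => G B a x with hvdef
  have hmv : J.mulVec v = 0 := by
    funext A'
    simpa [Matrix.mulVec, dotProduct, hJdef, hvdef] using hsum A'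
  have hdet := hjac x hx
  have hv : v = 0 := by
    have := congrArg (fun w => J⁻¹.mulVec w) hmv
    simpa [Matrix.mulVec_mulVec, Matrix.nonsing_inv_mul J hdet, Matrix.one_mulVec,
      Matrix.mulVec_zero] using this
  have := congrFun hv A
  simpa [hvdef] using this
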